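/- Let F be an arbitrary field and n ≥ 1. Every double coset of Sp_{2n}(F) × Sp_{2n}(F) in GL_{2n}(F) contains an element of the form diag(x, I_n) with x ∈ GL_n(F); that is, for every g ∈ GL_{2n}(F) there exist h₁, h₂ ∈ Sp_{2n}(F) and x ∈ GL_n(F) such that g = h₁ · diag(x, I_n) · h₂. -/

import Mathlib

/-!
Let `ω(x, y) = xᵀ J y` and `α(x, y) = xᵀ (gᵀ J g) y`; both are nondegenerate alternating
forms, and `α(x, y) = ω(T x, y)` for `T = ω⁻¹ α`. Suppose `F²ⁿ = L ⊕ L'` with `L` and `L'`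
isotropic for both forms. Fix a basis `b` of `L'` and let `a`, `a'` be the bases of `L` dual to
`b` under `ω` and under `α`. The matrices `s`, `t` with columns `(a, b)` and `(a', b)` satisfy
`sᵀ J s = J` and `(g t)ᵀ J (g t) = J`, and `s = t · diag(x, 1)` where `x` expresses `a` in terms
of `a'`; hence `g = (g t) · diag(x, 1) · s⁻¹`.

A common Lagrangian is `T`-invariant, and `L`, `L'` are built by induction on the dimension.
Take `v` whose annihilator in `F[X]` is that of `T`, generated by `m = minpoly T`, and `u` with
`ω(u, q(T) v) = λ(q)`, the coefficient of `X ^ (deg m - 1)` in `q mod m`. The pairing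
`(q, r) ↦ λ(q r)` on `F[X]/(m)` is perfect, hence so is the pairing of the cyclic spaces
`F[T] u` and `F[T] v` by `ω`; both are isotropic, and one recurses on the `ω`-orthogonal of their
sum.
-/

open Matrix

/-- `J_{2n} = [[0, I_n], [-I_n, 0]]`, the standard symplectic matrix. -/
def symplecticJ (n : ℕ) (F : Type*) [Field F] :
    Matrix (Fin n ⊕ Fin n) (Fin n ⊕ Fin n) F :=
  Matrix.fromBlocks 0 1 (-1) 0

/-- A matrix `g` is symplectic if `gᵀ J g = J`. -/
def IsSymplecticMat {n : ℕ} {F : Type*} [Field F]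
    (g : Matrix (Fin n ⊕ Fin n) (Fin n ⊕ Fin n) F) : Prop :=
  gᵀ * symplecticJ n F * g = symplecticJ n F

open Polynomial Module

theorem Polynomial.exists_coeff_mul_modByMonic_ne_zero {F : Type*} [Field F] {m r : F[X]}
    (hm : m.Monic) (hr : ¬ m ∣ r) :
    ∃ q : F[X], ((q * r) %ₘ m).coeff (m.natDegree - 1) ≠ 0 := by
  set r₀ := r %ₘ m
  have hr₀ : r₀ ≠ 0 := fun h => hr ((modByMonic_eq_zero_iff_dvd hm).mp h)
  have hlt : r₀.natDegree < m.natDegree :=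
    natDegree_modByMonic_lt r hm fun h => hr (h ▸ one_dvd r)
  obtain ⟨k, hk⟩ : ∃ k, m.natDegree - 1 = k + r₀.natDegree :=
    ⟨_, (Nat.sub_add_cancel (by omega)).symm⟩
  refine ⟨X ^ k, ?_⟩
  have hmod : (X ^ k * r) %ₘ m = X ^ k * r₀ := by
    rw [modByMonic_eq_of_dvd_sub hm (p₂ := X ^ k * r₀), modByMonic_eq_self_iff hm]
    · rw [degree_eq_natDegree (mul_ne_zero (pow_ne_zero _ X_ne_zero) hr₀),
        degree_eq_natDegree hm.ne_zero, natDegree_mul (pow_ne_zero _ X_ne_zero) hr₀,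
        natDegree_X_pow]
      exact_mod_cast (by omega)
    · rw [← mul_sub]
      exact dvd_mul_of_dvd_right (dvd_sub_comm.mp (dvd_modByMonic_sub r m)) _
  rw [hmod, hk, add_comm, coeff_X_pow_mul]
  exact leadingCoeff_ne_zero.mpr hr₀

theorem isCompl_sup_sup_of_isCompl_sup_sup {α : Type*} [Lattice α] [BoundedOrder α]
    [IsModularLattice α] {a b c d : α} (hab : Disjoint a b) (hcd : Disjoint c d)
    (h : IsCompl (a ⊔ b) (c ⊔ d)) : IsCompl (a ⊔ c) (b ⊔ d) := by
  rw [sup_comm b d]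
  refine Disjoint.isCompl_sup_left_of_isCompl_sup_right
    (hcd.disjoint_sup_right_of_disjoint_sup_left (h.disjoint.mono_left le_sup_right).symm) ?_
  rw [show c ⊔ (d ⊔ b) = b ⊔ (c ⊔ d) by ac_rfl]
  exact Disjoint.isCompl_sup_right_of_isCompl_sup_left hab h

theorem Module.Basis.isUnit_toMatrix {ι R M : Type*} [Fintype ι] [DecidableEq ι] [CommRing R]
    [AddCommGroup M] [Module R M] (b b' : Basis ι R M) : IsUnit (b.toMatrix b') :=
  letI := b.invertibleToMatrix b'
  isUnit_of_invertible _

section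

variable {F V : Type*} [Field F] [AddCommGroup V] [Module F V]

namespace Module.Basis

variable {ι κ : Type*} {L L' : Submodule F V}

noncomputable def ofIsCompl (h : IsCompl L L') (a : Basis ι F L) (b : Basis κ F L') :
    Basis (ι ⊕ κ) F V :=
  (a.prod b).map (Submodule.prodEquivOfIsCompl L L' h)

variable (h : IsCompl L L') (a a' : Basis ι F L) (b : Basis κ F L')

@[simp]
theorem ofIsCompl_inl (i : ι) : ofIsCompl h a b (Sum.inl i) = a i := by
  simp [ofIsCompl]

@[simp]
theorem ofIsCompl_inr (i : κ) : ofIsCompl h a b (Sum.inr i) = b i := by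
  simp [ofIsCompl]

theorem ofIsCompl_toMatrix_ofIsCompl [Fintype ι] [Fintype κ] [DecidableEq κ] :
    (ofIsCompl h a' b).toMatrix (ofIsCompl h a b) = fromBlocks (a'.toMatrix a) 0 0 1 := by
  ext (i | i) (j | j) <;>
    simp [toMatrix_apply, ofIsCompl, prod_repr_inl, prod_repr_inr, one_apply,
      Finsupp.single_apply, eq_comm]

end Module.Basis

namespace Module.End

variable (T : Module.End F V)

noncomputable def cyclicSubspace (v : V) : Submodule F V :=
  LinearMap.range (LinearMap.applyₗ v ∘ₗ (aeval T).toLinearMap)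

variable {T}

theorem cyclicSubspace_mem_invtSubmodule (v : V) : T.cyclicSubspace v ∈ T.invtSubmodule := by
  rintro _ ⟨q, rfl⟩
  exact ⟨X * q, by simp [Module.End.mul_apply]⟩

theorem self_mem_cyclicSubspace (v : V) : v ∈ T.cyclicSubspace v := ⟨1, by simp⟩

variable (T) in
theorem exists_minpoly_dvd_of_aeval_apply_eq_zero [FiniteDimensional F V] :
    ∃ v : V, ∀ q : F[X], aeval T q v = 0 → minpoly F T ∣ q := by
  obtain ⟨v, hv⟩ := Module.exists_ker_toSpanSingleton_eq_annihilator (R := F[X]) (M := AEval' T)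
  refine ⟨(AEval'.of T).symm v, fun q hq => ?_⟩
  rw [← Ideal.mem_span_singleton, Polynomial.span_minpoly_eq_annihilator, ← hv, LinearMap.mem_ker,
    LinearMap.toSpanSingleton_apply, ← (AEval'.of T).symm.map_eq_zero_iff]
  simpa using hq

end Module.End

section SelfAdjoint

variable {ω : LinearMap.BilinForm F V} {T : Module.End F V}

theorem LinearMap.IsSelfAdjoint.pow (hT : ω.IsSelfAdjoint T) (k : ℕ) :
    ω.IsSelfAdjoint ⇑(T ^ k) := by
  induction k with
  | zero => exact isAdjointPair_one
  | succ k ih =>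
    have := ih.mul hT
    rwa [← pow_succ, ← pow_succ'] at this

theorem LinearMap.IsSelfAdjoint.aeval (hT : ω.IsSelfAdjoint T) (q : F[X]) :
    ω.IsSelfAdjoint ⇑(aeval T q) := by
  induction q using Polynomial.induction_on' with
  | add p q hp hq => rw [map_add]; exact hp.add hq
  | monomial k a =>
    rw [aeval_monomial, Algebra.algebraMap_eq_smul_one, smul_mul_assoc, one_mul,
      LinearMap.coe_smul]
    exact (hT.pow k).smul a

end SelfAdjoint

namespace LinearMap.BilinForm

variable {ω : LinearMap.BilinForm F V} {T : Module.End F V}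

theorem isSelfAdjoint_of_isAlt (hω : ω.IsAlt) (hT : (ω ∘ₗ T).IsAlt) :
    ω.IsSelfAdjoint T := by
  intro x y
  have h := hT.neg x y
  rw [LinearMap.comp_apply, LinearMap.comp_apply] at h
  rw [← LinearMap.IsAlt.neg hω (T y) x, ← h, neg_neg]

theorem apply_aeval_self_eq_zero (hω : ω.IsAlt) (hT : (ω ∘ₗ T).IsAlt) (q : F[X]) (v : V) :
    ω v (aeval T q v) = 0 := by
  have hpow := (isSelfAdjoint_of_isAlt hω hT).pow
  induction q using Polynomial.induction_on' with
  | add p q hp hq => simp [hp, hq]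
  | monomial k a =>
    rw [aeval_monomial, Algebra.algebraMap_eq_smul_one, smul_mul_assoc, one_mul,
      LinearMap.smul_apply, map_smul, smul_eq_zero]
    right
    obtain ⟨j, rfl | rfl⟩ := Nat.even_or_odd' k
    · rw [two_mul, pow_add, Module.End.mul_apply, ← hpow, hω]
    · rw [show T ^ (2 * j + 1) = T ^ j * (T * T ^ j) by rw [← pow_succ', ← pow_add]; ring_nf,
        Module.End.mul_apply, ← hpow, Module.End.mul_apply, hω.eq_iff]
      exact hT _

theorem cyclicSubspace_le_orthogonal (hω : ω.IsAlt) (hT : (ω ∘ₗ T).IsAlt) (v : V) :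
    T.cyclicSubspace v ≤ ω.orthogonal (T.cyclicSubspace v) := by
  rintro _ ⟨r, rfl⟩ _ ⟨q, rfl⟩
  change ω (aeval T q v) (aeval T r v) = 0
  rw [(isSelfAdjoint_of_isAlt hω hT).aeval, ← Module.End.mul_apply, ← map_mul]
  exact apply_aeval_self_eq_zero hω hT _ v

theorem exists_apply_aeval_eq_coeff_modByMonic [FiniteDimensional F V] (hnd : ω.Nondegenerate)
    {m : F[X]} (hm : m.Monic) {v : V} (hv : ∀ q : F[X], aeval T q v = 0 → m ∣ q) :
    ∃ u : V, ∀ q : F[X], ω u (aeval T q v) = (q %ₘ m).coeff (m.natDegree - 1) := by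
  set φ : F[X] →ₗ[F] V := LinearMap.applyₗ v ∘ₗ (aeval T).toLinearMap
  set ℓ : Dual F F[X] := lcoeff F (m.natDegree - 1) ∘ₗ modByMonicHom m
  have hℓ : ℓ ∈ LinearMap.range φ.dualMap := by
    rw [LinearMap.range_dualMap_eq_dualAnnihilator_ker, Submodule.mem_dualAnnihilator]
    intro q hq
    change (q %ₘ m).coeff _ = 0
    rw [(modByMonic_eq_zero_iff_dvd hm).mpr (hv q hq), coeff_zero]
  obtain ⟨f, hf⟩ := hℓ
  refine ⟨(ω.toDual hnd).symm f, fun q => ?_⟩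
  rw [← toDual_def hnd, LinearEquiv.apply_symm_apply]
  exact LinearMap.congr_fun hf q

theorem exists_disjoint_orthogonal_cyclicSubspace [FiniteDimensional F V] [Nontrivial V]
    (hω : ω.IsAlt) (hnd : ω.Nondegenerate) (hT : (ω ∘ₗ T).IsAlt) :
    ∃ u v : V, v ≠ 0 ∧ Disjoint (T.cyclicSubspace u) (ω.orthogonal (T.cyclicSubspace v)) ∧
      Disjoint (T.cyclicSubspace v) (ω.orthogonal (T.cyclicSubspace u)) := by
  set m := minpoly F T
  have hm : m.Monic := minpoly.monic (Algebra.IsIntegral.isIntegral T)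
  have hm_dvd : ∀ {q : F[X]} {x : V}, aeval T q x ≠ 0 → ¬ m ∣ q := fun hx hq =>
    hx (by rw [minpoly.dvd_iff.mp hq, LinearMap.zero_apply])
  obtain ⟨v, hv⟩ := T.exists_minpoly_dvd_of_aeval_apply_eq_zero
  obtain ⟨u, hu⟩ := exists_apply_aeval_eq_coeff_modByMonic hnd hm hv
  have hpair : ∀ q r : F[X],
      ω (aeval T r u) (aeval T q v) = ((r * q) %ₘ m).coeff (m.natDegree - 1) := by
    intro q r
    rw [(isSelfAdjoint_of_isAlt hω hT).aeval, ← Module.End.mul_apply, ← map_mul, hu]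
  refine ⟨u, v, fun h => minpoly.not_isUnit F T (isUnit_of_dvd_one (hv 1 (by simp [h]))),
    ?_, ?_⟩
  · refine Submodule.disjoint_def.mpr ?_
    rintro _ ⟨r, rfl⟩ hr
    by_contra hne
    obtain ⟨q, hq⟩ := Polynomial.exists_coeff_mul_modByMonic_ne_zero hm (hm_dvd hne)
    rw [mul_comm, ← hpair] at hq
    exact hq (hω.eq_iff.mp (hr _ ⟨q, rfl⟩))
  · refine Submodule.disjoint_def.mpr ?_
    rintro _ ⟨q, rfl⟩ hq
    by_contra hne
    obtain ⟨r, hr⟩ := Polynomial.exists_coeff_mul_modByMonic_ne_zero hm (hm_dvd hne)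
    rw [← hpair] at hr
    exact hr (hq _ ⟨r, rfl⟩)

theorem orthogonal_sup (M N : Submodule F V) :
    ω.orthogonal (M ⊔ N) = ω.orthogonal M ⊓ ω.orthogonal N :=
  le_antisymm (le_inf (orthogonal_le le_sup_left) (orthogonal_le le_sup_right))
    fun x hx y hy => by
      obtain ⟨m, hm, n, hn, rfl⟩ := Submodule.mem_sup.mp hy
      rw [map_add, LinearMap.add_apply, hx.1 m hm, hx.2 n hn, add_zero]

theorem sup_le_orthogonal_sup (hω : ω.IsRefl) {M N : Submodule F V}
    (hM : M ≤ ω.orthogonal M) (hN : N ≤ ω.orthogonal N) (hMN : N ≤ ω.orthogonal M) :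
    M ⊔ N ≤ ω.orthogonal (M ⊔ N) := by
  rw [orthogonal_sup]
  exact sup_le (le_inf hM fun x hx y hy => hω _ _ (hMN hy x hx)) (le_inf hMN hN)

theorem disjoint_orthogonal_sup {M N : Submodule F V} (hM : M ≤ ω.orthogonal M)
    (hN : N ≤ ω.orthogonal N) (hMN : Disjoint M (ω.orthogonal N))
    (hNM : Disjoint N (ω.orthogonal M)) : Disjoint (M ⊔ N) (ω.orthogonal (M ⊔ N)) := by
  rw [orthogonal_sup, Submodule.disjoint_def]
  rintro _ hx ⟨hxM, hxN⟩
  obtain ⟨m, hm, n, hn, rfl⟩ := Submodule.mem_sup.mp hx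
  have hn0 : n = 0 := Submodule.disjoint_def.mp hNM n hn
    (by simpa using sub_mem hxM (hM hm))
  have hm0 : m = 0 := Submodule.disjoint_def.mp hMN m hm
    (by simpa using sub_mem hxN (hN hn))
  rw [hm0, hn0, add_zero]

theorem orthogonal_mem_invtSubmodule (hT : ω.IsSelfAdjoint T) {P : Submodule F V}
    (hP : P ∈ T.invtSubmodule) : ω.orthogonal P ∈ T.invtSubmodule := fun x hx y hy => by
  rw [← hT]; exact hx (T y) (hP hy)

theorem map_subtype_le_orthogonal {W : Submodule F V} {K : Submodule F W}
    (hK : K ≤ (ω.restrict W).orthogonal K) :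
    K.map W.subtype ≤ ω.orthogonal (K.map W.subtype) := by
  rintro _ ⟨y, hy, rfl⟩ _ ⟨x, hx, rfl⟩
  exact hK hy x hx

theorem exists_isCompl_invtSubmodule_le_orthogonal [FiniteDimensional F V] (hω : ω.IsAlt)
    (hnd : ω.Nondegenerate) (hT : (ω ∘ₗ T).IsAlt) :
    ∃ L L' : Submodule F V, IsCompl L L' ∧ L ∈ T.invtSubmodule ∧ L' ∈ T.invtSubmodule ∧
      L ≤ ω.orthogonal L ∧ L' ≤ ω.orthogonal L' := by
  induction hd : finrank F V using Nat.strong_induction_on generalizing V with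
  | _ d ih =>
  rcases subsingleton_or_nontrivial V with hV | hV
  · refine ⟨⊤, ⊥, isCompl_top_bot, Module.End.invtSubmodule.top_mem T,
      Module.End.invtSubmodule.bot_mem T, fun x _ y _ => ?_, bot_le⟩
    rw [Subsingleton.elim x 0, map_zero]
  obtain ⟨u, v, hv, huv, hvu⟩ := exists_disjoint_orthogonal_cyclicSubspace hω hnd hT
  set M := T.cyclicSubspace u
  set N := T.cyclicSubspace v
  have hM : M ≤ ω.orthogonal M := cyclicSubspace_le_orthogonal hω hT u
  have hN : N ≤ ω.orthogonal N := cyclicSubspace_le_orthogonal hω hT v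
  set W := ω.orthogonal (M ⊔ N)
  have hPW : IsCompl (M ⊔ N) W := (isCompl_orthogonal_iff_disjoint hω.isRefl).mpr
    (disjoint_orthogonal_sup hM hN huv hvu)
  have hWinv : W ∈ T.invtSubmodule := orthogonal_mem_invtSubmodule
    (isSelfAdjoint_of_isAlt hω hT) (Module.End.invtSubmodule.sup_mem
      (T.cyclicSubspace_mem_invtSubmodule u) (T.cyclicSubspace_mem_invtSubmodule v))
  have hWnd : (ω.restrict W).Nondegenerate := nondegenerate_restrict_of_disjoint_orthogonal _
    hω.isRefl (by rw [orthogonal_orthogonal hnd hω.isRefl]; exact hPW.disjoint.symm)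
  have hWd : finrank F W < d := by
    have hP : finrank F ↥(M ⊔ N) ≠ 0 := fun h => hv <| (Submodule.mem_bot F).mp <|
      Submodule.finrank_eq_zero.mp h ▸ Submodule.mem_sup_right (T.self_mem_cyclicSubspace v)
    have := Submodule.finrank_add_eq_of_isCompl hPW
    omega
  obtain ⟨K, K', hKK', hK, hK', hKo, hK'o⟩ := ih _ hWd (ω := ω.restrict W)
    (T := T.restrict hWinv) (fun x => hω x) hWnd (fun x => hT x) rfl
  refine ⟨M ⊔ K.map W.subtype, N ⊔ K'.map W.subtype, ?_, ?_, ?_, ?_, ?_⟩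
  · refine isCompl_sup_sup_of_isCompl_sup_sup (huv.mono_right hN)
      (Submodule.disjoint_map W.injective_subtype hKK'.disjoint) ?_
    rwa [← Submodule.map_sup, hKK'.sup_eq_top, Submodule.map_subtype_top]
  · exact Module.End.invtSubmodule.sup_mem (T.cyclicSubspace_mem_invtSubmodule u)
      (Module.End.invtSubmodule.map_subtype_mem_of_mem_invtSubmodule T hWinv hK)
  · exact Module.End.invtSubmodule.sup_mem (T.cyclicSubspace_mem_invtSubmodule v)
      (Module.End.invtSubmodule.map_subtype_mem_of_mem_invtSubmodule T hWinv hK')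
  · exact sup_le_orthogonal_sup hω.isRefl hM (map_subtype_le_orthogonal hKo)
      ((Submodule.map_subtype_le W K).trans (orthogonal_le le_sup_left))
  · exact sup_le_orthogonal_sup hω.isRefl hN (map_subtype_le_orthogonal hK'o)
      ((Submodule.map_subtype_le W K').trans (orthogonal_le le_sup_right))

theorem exists_isCompl_le_orthogonal_of_isAlt [FiniteDimensional F V]
    {α : LinearMap.BilinForm F V} (hω : ω.IsAlt) (hnd : ω.Nondegenerate) (hα : α.IsAlt) :
    ∃ L L' : Submodule F V, IsCompl L L' ∧ L ≤ ω.orthogonal L ∧ L' ≤ ω.orthogonal L' ∧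
      L ≤ α.orthogonal L ∧ L' ≤ α.orthogonal L' := by
  set T := α.symmCompOfNondegenerate ω hnd
  have hαT (x y : V) : α x y = ω (T x) y := (symmCompOfNondegenerate_left_apply α hnd y x).symm
  obtain ⟨L, L', hLL', hL, hL', hLω, hL'ω⟩ :=
    exists_isCompl_invtSubmodule_le_orthogonal hω hnd (T := T) fun x =>
      (hαT x x).symm.trans (hα x)
  refine ⟨L, L', hLL', hLω, hL'ω, fun x hx y hy => ?_, fun x hx y hy => ?_⟩
  · rw [hαT]; exact hLω hx _ (hL hy)
  · rw [hαT]; exact hL'ω hx _ (hL' hy)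

variable {L L' : Submodule F V}

theorem isPerfPair_domRestrict₁₂ [FiniteDimensional F V] (hnd : ω.Nondegenerate)
    (h : IsCompl L L') (hL : L ≤ ω.orthogonal L) (hL' : L' ≤ ω.orthogonal L') :
    (ω.domRestrict₁₂ L L').IsPerfPair := by
  have hzero (f : V →ₗ[F] F) (hfL : ∀ z ∈ L, f z = 0) (hfL' : ∀ z ∈ L', f z = 0)
      (z : V) : f z = 0 := by
    have : L ⊔ L' ≤ LinearMap.ker f := sup_le hfL hfL'
    rw [h.sup_eq_top] at this
    exact this Submodule.mem_top
  refine .of_injective ((injective_iff_map_eq_zero _).mpr fun x hx => ?_)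
    ((injective_iff_map_eq_zero _).mpr fun y hy => ?_)
  · exact Subtype.ext <| hnd.1 x <| hzero (ω x) (fun z hz => hL hz x x.2)
      fun z hz => LinearMap.congr_fun hx ⟨z, hz⟩
  · exact Subtype.ext <| hnd.2 y <|
      hzero (ω.flip y) (fun z hz => LinearMap.congr_fun hy ⟨z, hz⟩) fun z hz => hL' y.2 z hz

theorem finrank_eq_of_isCompl [FiniteDimensional F V] (hnd : ω.Nondegenerate)
    (h : IsCompl L L') (hL : L ≤ ω.orthogonal L) (hL' : L' ≤ ω.orthogonal L') :
    finrank F L = finrank F L' :=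
  have := isPerfPair_domRestrict₁₂ hnd h hL hL'
  Module.finrank_of_isPerfPair (ω.domRestrict₁₂ L L')

theorem exists_basis_apply_eq_ite {ι : Type*} [DecidableEq ι] [Finite ι]
    [FiniteDimensional F V] (hnd : ω.Nondegenerate) (h : IsCompl L L') (hL : L ≤ ω.orthogonal L)
    (hL' : L' ≤ ω.orthogonal L') (b : Basis ι F L') :
    ∃ a : Basis ι F L, ∀ i j, ω (a i) (b j) = if i = j then 1 else 0 := by
  have := isPerfPair_domRestrict₁₂ hnd h hL hL'
  refine ⟨b.dualBasis.map (ω.domRestrict₁₂ L L').toPerfPair.symm, fun i j => ?_⟩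
  rw [Basis.map_apply, ← domRestrict₁₂_apply, ← LinearMap.toPerfPair_apply,
    LinearEquiv.apply_symm_apply, Basis.dualBasis_apply_self]
  exact if_congr eq_comm rfl rfl

theorem toMatrix_ofIsCompl {ι : Type*} [Fintype ι] [DecidableEq ι] (hω : ω.IsAlt)
    (h : IsCompl L L') (hL : L ≤ ω.orthogonal L) (hL' : L' ≤ ω.orthogonal L')
    (a : Basis ι F L) (b : Basis ι F L')
    (hab : ∀ i j, ω (a i) (b j) = if i = j then 1 else 0) :
    BilinForm.toMatrix (a.ofIsCompl h b) ω = fromBlocks 0 1 (-1) 0 := by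
  ext (i | i) (j | j)
  · simpa [toMatrix_apply] using hL (a j).2 _ (a i).2
  · simp [toMatrix_apply, hab, one_apply]
  · rw [toMatrix_apply, Basis.ofIsCompl_inl, Basis.ofIsCompl_inr, ← LinearMap.IsAlt.neg hω, hab]
    simp [one_apply, eq_comm]
  · simpa [toMatrix_apply] using hL' (b j).2 _ (b i).2

end LinearMap.BilinForm

end

section Matrices

variable {F ι : Type*} [Field F] [Fintype ι] [DecidableEq ι]

theorem Matrix.nondegenerate_toBilin'_transpose_mul_mul {M : Matrix ι ι F}
    (hM : M.toBilin'.Nondegenerate) (g : GL ι F) :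
    ((g : Matrix ι ι F)ᵀ * M * g).toBilin'.Nondegenerate := by
  rw [LinearMap.BilinForm.nondegenerate_toBilin'_iff_det_ne_zero] at hM ⊢
  have hg := ((Matrix.isUnit_iff_isUnit_det _).mp g.isUnit).ne_zero
  rw [det_mul, det_mul, det_transpose]
  exact mul_ne_zero (mul_ne_zero hg hM) hg

theorem Matrix.isAlt_toBilin'_transpose_mul_mul {M : Matrix ι ι F} (hM : M.toBilin'.IsAlt)
    (P : Matrix ι ι F) : (Pᵀ * M * P).toBilin'.IsAlt := by
  rw [← Matrix.toBilin'_comp]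
  exact fun x => hM _

theorem Matrix.transpose_mul_mul_toMatrix_ofIsCompl {M : Matrix (ι ⊕ ι) (ι ⊕ ι) F}
    (hM : M.toBilin'.IsAlt) {L L' : Submodule F (ι ⊕ ι → F)} (h : IsCompl L L')
    (hL : L ≤ M.toBilin'.orthogonal L) (hL' : L' ≤ M.toBilin'.orthogonal L')
    (a : Basis ι F L) (b : Basis ι F L')
    (hab : ∀ i j, M.toBilin' (a i) (b j) = if i = j then 1 else 0) :
    ((Pi.basisFun F (ι ⊕ ι)).toMatrix (a.ofIsCompl h b))ᵀ * M *
      (Pi.basisFun F (ι ⊕ ι)).toMatrix (a.ofIsCompl h b) = fromBlocks 0 1 (-1) 0 := by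
  rw [← LinearMap.BilinForm.toMatrix_ofIsCompl hM h hL hL' a b hab,
    ← LinearMap.BilinForm.toMatrix_mul_basis_toMatrix (Pi.basisFun F (ι ⊕ ι)),
    LinearMap.BilinForm.toMatrix_basisFun, LinearMap.BilinForm.toMatrix'_toBilin']

end Matrices

section Symplectic

variable {F : Type*} [Field F] {n : ℕ}

theorem symplecticJ_mul_self : symplecticJ n F * symplecticJ n F = -1 := by
  simp [symplecticJ, fromBlocks_multiply, ← fromBlocks_one, fromBlocks_neg]

theorem nondegenerate_toBilin'_symplecticJ : (symplecticJ n F).toBilin'.Nondegenerate :=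
  LinearMap.BilinForm.nondegenerate_toBilin'_of_det_ne_zero' _
    (isUnit_det_of_left_inverse (B := -symplecticJ n F)
      (by rw [neg_mul, symplecticJ_mul_self, neg_neg])).ne_zero

theorem isAlt_toBilin'_symplecticJ : (symplecticJ n F).toBilin'.IsAlt := by
  intro v
  rw [toBilin'_apply', ← Sum.elim_comp_inl_inr v, symplecticJ, fromBlocks_mulVec,
    sumElim_dotProduct_sumElim]
  simp [dotProduct_comm, Matrix.neg_mulVec]

theorem IsSymplecticMat.inv {g : GL (Fin n ⊕ Fin n) F}
    (hg : IsSymplecticMat (g : Matrix (Fin n ⊕ Fin n) (Fin n ⊕ Fin n) F)) :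
    IsSymplecticMat (↑g⁻¹ : Matrix (Fin n ⊕ Fin n) (Fin n ⊕ Fin n) F) := by
  unfold IsSymplecticMat at hg ⊢
  calc (↑g⁻¹ : Matrix (Fin n ⊕ Fin n) (Fin n ⊕ Fin n) F)ᵀ * symplecticJ n F * ↑g⁻¹
      = (↑g⁻¹ : Matrix (Fin n ⊕ Fin n) (Fin n ⊕ Fin n) F)ᵀ *
          (↑g ᵀ * symplecticJ n F * ↑g) * ↑g⁻¹ := by rw [hg]
    _ = (↑g * ↑g⁻¹ : Matrix (Fin n ⊕ Fin n) (Fin n ⊕ Fin n) F)ᵀ * symplecticJ n F *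
          (↑g * ↑g⁻¹) := by simp only [transpose_mul, Matrix.mul_assoc]
    _ = symplecticJ n F := by simp

end Symplectic

theorem doubleCoset_contains_diag_general (F : Type*) [Field F] (n : ℕ)
    (g : GL (Fin n ⊕ Fin n) F) :
    ∃ (h₁ h₂ : GL (Fin n ⊕ Fin n) F) (x : GL (Fin n) F),
      IsSymplecticMat (h₁ : Matrix (Fin n ⊕ Fin n) (Fin n ⊕ Fin n) F) ∧
      IsSymplecticMat (h₂ : Matrix (Fin n ⊕ Fin n) (Fin n ⊕ Fin n) F) ∧
      (g : Matrix (Fin n ⊕ Fin n) (Fin n ⊕ Fin n) F) =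
        (h₁ : Matrix (Fin n ⊕ Fin n) (Fin n ⊕ Fin n) F) *
        Matrix.fromBlocks (x : Matrix (Fin n) (Fin n) F) 0 0 1 *
        (h₂ : Matrix (Fin n ⊕ Fin n) (Fin n ⊕ Fin n) F) := by
  classical
  set A := (g : Matrix (Fin n ⊕ Fin n) (Fin n ⊕ Fin n) F)ᵀ * symplecticJ n F * g
  have hJ : (symplecticJ n F).toBilin'.Nondegenerate := nondegenerate_toBilin'_symplecticJ
  have hA : A.toBilin'.Nondegenerate := nondegenerate_toBilin'_transpose_mul_mul hJ g
  have hAalt : A.toBilin'.IsAlt := isAlt_toBilin'_transpose_mul_mul isAlt_toBilin'_symplecticJ _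
  obtain ⟨L, L', hLL', hJL, hJL', hAL, hAL'⟩ :=
    LinearMap.BilinForm.exists_isCompl_le_orthogonal_of_isAlt isAlt_toBilin'_symplecticJ hJ hAalt
  have hdim : finrank F L' = n := by
    have h₁ := LinearMap.BilinForm.finrank_eq_of_isCompl hJ hLL' hJL hJL'
    have h₂ := Submodule.finrank_add_eq_of_isCompl hLL'
    simp only [finrank_fintype_fun_eq_card, Fintype.card_sum, Fintype.card_fin] at h₂
    omega
  set b := Module.finBasisOfFinrankEq F L' hdim
  obtain ⟨a, hab⟩ := LinearMap.BilinForm.exists_basis_apply_eq_ite hJ hLL' hJL hJL' b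
  obtain ⟨a', ha'b⟩ := LinearMap.BilinForm.exists_basis_apply_eq_ite hA hLL' hAL hAL' b
  set e := Pi.basisFun F (Fin n ⊕ Fin n)
  obtain ⟨s, hs⟩ := e.isUnit_toMatrix (a.ofIsCompl hLL' b)
  obtain ⟨t, ht⟩ := e.isUnit_toMatrix (a'.ofIsCompl hLL' b)
  obtain ⟨x, hx⟩ := a'.isUnit_toMatrix a
  have hst : (s : Matrix (Fin n ⊕ Fin n) (Fin n ⊕ Fin n) F) =
      (t : Matrix (Fin n ⊕ Fin n) (Fin n ⊕ Fin n) F) * fromBlocks (x : Matrix _ _ F) 0 0 1 := by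
    rw [hs, ht, hx, ← Basis.ofIsCompl_toMatrix_ofIsCompl hLL', Basis.toMatrix_mul_toMatrix]
  refine ⟨g * t, s⁻¹, x, ?_, IsSymplecticMat.inv ?_, ?_⟩
  · have htA := transpose_mul_mul_toMatrix_ofIsCompl hAalt hLL' hAL hAL' a' b ha'b
    rw [← ht] at htA
    simp only [IsSymplecticMat, A, Units.val_mul, transpose_mul, Matrix.mul_assoc] at htA ⊢
    exact htA
  · rw [IsSymplecticMat, hs]
    exact transpose_mul_mul_toMatrix_ofIsCompl isAlt_toBilin'_symplecticJ hLL' hJL hJL' a b hab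
  · rw [Units.val_mul, Matrix.mul_assoc (g : Matrix (Fin n ⊕ Fin n) (Fin n ⊕ Fin n) F), ← hst,
      Matrix.mul_assoc, Units.mul_inv, Matrix.mul_one]

/-- Every `Sp_{2n}(F) × Sp_{2n}(F)` double coset in `GL_{2n}(F)` contains an element
of the form `diag(x, I_n)` with `x ∈ GL_n(F)`. -/
theorem doubleCoset_contains_diag (F : Type*) [Field F] (n : ℕ) (hn : 1 ≤ n)
    (g : GL (Fin n ⊕ Fin n) F) :
    ∃ (h₁ h₂ : GL (Fin n ⊕ Fin n) F) (x : GL (Fin n) F),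
      IsSymplecticMat (h₁ : Matrix (Fin n ⊕ Fin n) (Fin n ⊕ Fin n) F) ∧
      IsSymplecticMat (h₂ : Matrix (Fin n ⊕ Fin n) (Fin n ⊕ Fin n) F) ∧
      (g : Matrix (Fin n ⊕ Fin n) (Fin n ⊕ Fin n) F) =
        (h₁ : Matrix (Fin n ⊕ Fin n) (Fin n ⊕ Fin n) F) *
        Matrix.fromBlocks (x : Matrix (Fin n) (Fin n) F) 0 0 1 *
        (h₂ : Matrix (Fin n ⊕ Fin n) (Fin n ⊕ Fin n) F) :=
  doubleCoset_contains_diag_general F n g
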